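/- The c.d.g.a. M = (Λ(A₁, x₁, y₁, z₁, p₁, q₁), D) with all generators of degree 1 and differential DA = Dx = Dy = Dz = 0, Dp = Ax, Dq = Ap is not formal: there is no c.d.g.a. morphism ψ: M → (H*(M), 0) inducing the identity on cohomology. In fact, any morphism ψ must send A, x, y, z to their cohomology classes and p, q to 0, but then ψ kills the nonzero cohomology class [Ap] ∈ H²(M). -/

import Mathlib

/-!
STATEMENT 16: The c.d.g.a. M = (Λ(A₁,x₁,y₁,z₁,p₁,q₁), D), free graded-commutative on
six generators of degree 1, with DA = Dx = Dy = Dz = 0, Dp = Ax, Dq = Ap, is not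
formal: there is no c.d.g.a. morphism ψ : M → (H*(M), 0) inducing the identity on
cohomology.

Since all generators have degree 1, M is the exterior algebra on six generators,
modeled concretely as below (generators 0↦A, 1↦x, 2↦y, 3↦z, 4↦p, 5↦q).  A morphism
ψ : M → (H*(M),0) inducing the identity on cohomology is represented by a linear
endomorphism ψ of M which: preserves degrees, is unital, kills exact elements and
composes to zero with D (so it is a chain map to the zero differential, well-defined
on cohomology), takes values in the closed elements, is multiplicative up to exact
terms (i.e. is multiplicative into H*(M)), and sends every closed element to an
element representing the same cohomology class.
-/

open Finset Module

/-- The exterior algebra on six degree-one generators α¹,…,α⁶, as coordinates on the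
basis of increasing wedge monomials indexed by subsets of `Fin 6`. -/
abbrev Lam : Type := Finset (Fin 6) → ℝ

/-- The basis monomial α^S. -/
noncomputable def gen (S : Finset (Fin 6)) : Lam := Pi.single S 1

/-- Koszul sign when interleaving (the increasing enumerations of) `T` and `U`:
(−1) to the number of inversions. -/
def koszulSign (T U : Finset (Fin 6)) : ℝ :=
  (-1 : ℝ) ^ (((T ×ˢ U).filter fun p => p.2 < p.1).card)

/-- The wedge (exterior) product in coordinates. -/
noncomputable def wedge (f h : Lam) : Lam := fun S =>
  ∑ T ∈ S.powerset, koszulSign T (S \ T) * f T * h (S \ T)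

/-- The Chevalley–Eilenberg differential: the unique antiderivation with dαⁱ = g i,
given on the basis monomial α^S by d α^S = Σ_{i ∈ S} (−1)^{#{j ∈ S | j < i}} (g i) ∧ α^{S∖i}. -/
noncomputable def ceDiff (g : Fin 6 → Lam) : Lam →ₗ[ℝ] Lam :=
  (Pi.basisFun ℝ (Finset (Fin 6))).constr ℝ fun S =>
    ∑ i ∈ S, ((-1 : ℝ) ^ ((S.filter fun j => j < i).card)) • wedge (g i) (gen (S.erase i))

/-- The subspace Λᵏ of homogeneous elements of degree `k`. -/
def degSub (k : ℕ) : Submodule ℝ Lam where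
  carrier := {f | ∀ S : Finset (Fin 6), S.card ≠ k → f S = 0}
  add_mem' := by
    intro f g hf hg S hS
    simp only [Pi.add_apply, hf S hS, hg S hS, add_zero]
  zero_mem' := by intro S hS; rfl
  smul_mem' := by
    intro c f hf S hS
    simp only [Pi.smul_apply, hf S hS, smul_zero]

/-- Closed k-forms. -/
noncomputable def Zspace (D : Lam →ₗ[ℝ] Lam) (k : ℕ) : Submodule ℝ Lam :=
  degSub k ⊓ LinearMap.ker D

/-- Exact k-forms (the image of the (k−1)-forms under the differential). -/
noncomputable def Bspace (D : Lam →ₗ[ℝ] Lam) (k : ℕ) : Submodule ℝ Lam :=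
  (degSub (k - 1)).map D

/-- DA = Dx = Dy = Dz = 0, Dp = A∧x, Dq = A∧p (0-indexed generators A,x,y,z,p,q). -/
noncomputable def gDiff : Fin 6 → Lam := ![0, 0, 0, 0, gen {0, 1}, gen {0, 4}]

noncomputable def D : Lam →ₗ[ℝ] Lam := ceDiff gDiff

/-!
Every differential `D α^S` lies in the ideal generated by `A`, so the coefficient of a monomial
avoiding `A`, such as `x ∧ p`, only depends on the cohomology class. Since `x ∧ p` is closed,
`ψ (x ∧ p)` has `x ∧ p`-coefficient `1`. On the other hand a closed `1`-form has no
`p`-component, because `D p = A ∧ x` is the only differential of a generator hitting `A ∧ x`;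
so `ψ x ∧ ψ p`, which is cohomologous to `ψ (x ∧ p)`, has `x ∧ p`-coefficient `0`.
-/

lemma gen_apply (S T : Finset (Fin 6)) : gen S T = if T = S then 1 else 0 :=
  Pi.single_apply S 1 T

lemma gen_mem_degSub (S : Finset (Fin 6)) : gen S ∈ degSub S.card := by
  intro T hT
  rw [gen_apply, if_neg (by rintro rfl; exact hT rfl)]

lemma eq_sum_smul_gen_of_mem_degSub_one {c : Lam} (hc : c ∈ degSub 1) :
    c = ∑ i, c {i} • gen {i} := by
  funext S
  simp only [Finset.sum_apply, Pi.smul_apply, gen_apply, smul_eq_mul, mul_ite, mul_one, mul_zero]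
  by_cases hS : S.card = 1
  · obtain ⟨j, rfl⟩ := Finset.card_eq_one.mp hS
    simp [Finset.singleton_inj]
  · rw [hc S hS, Finset.sum_eq_zero]
    rintro i -
    rw [if_neg (by rintro rfl; exact hS (Finset.card_singleton i))]

lemma koszulSign_empty_right (T : Finset (Fin 6)) : koszulSign T ∅ = 1 := by
  simp [koszulSign]

lemma wedge_gen_empty (f : Lam) : wedge f (gen ∅) = f := by
  funext S
  rw [wedge, Finset.sum_eq_single_of_mem S (Finset.mem_powerset_self S)]
  · rw [Finset.sdiff_self, gen_apply, if_pos rfl, koszulSign_empty_right, one_mul, mul_one]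
  · intro T hT hTS
    rw [gen_apply, if_neg, mul_zero]
    rw [Finset.sdiff_eq_empty_iff_subset]
    exact fun hST => hTS (Finset.Subset.antisymm (Finset.mem_powerset.mp hT) hST)

lemma wedge_apply_eq_zero_of_left {f : Lam} {U : Finset (Fin 6)} (hf : ∀ T ⊆ U, f T = 0)
    (h : Lam) : wedge f h U = 0 :=
  Finset.sum_eq_zero fun T hT => by rw [hf T (Finset.mem_powerset.mp hT), mul_zero, zero_mul]

lemma zero_wedge (h : Lam) : wedge 0 h = 0 :=
  funext fun _ => wedge_apply_eq_zero_of_left (fun _ _ => rfl) h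

lemma wedge_gen_gen (U V S : Finset (Fin 6)) :
    wedge (gen U) (gen V) S = if U ⊆ S ∧ S \ U = V then koszulSign U V else 0 := by
  by_cases hU : U ⊆ S
  · rw [wedge, Finset.sum_eq_single_of_mem U (Finset.mem_powerset.mpr hU)]
    · by_cases hV : S \ U = V <;> simp [gen_apply, hU, hV]
    · intro T _ hT
      rw [gen_apply, if_neg hT, mul_zero, zero_mul]
  · rw [if_neg (fun h => hU h.1)]
    refine Finset.sum_eq_zero fun T hT => ?_
    rw [gen_apply, if_neg (by rintro rfl; exact hU (Finset.mem_powerset.mp hT)), mul_zero, zero_mul]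

lemma wedge_gen_gen_of_not_disjoint {U V : Finset (Fin 6)} (h : ¬ Disjoint U V) :
    wedge (gen U) (gen V) = 0 := by
  funext S
  rw [wedge_gen_gen, if_neg]
  · rfl
  · rintro ⟨-, rfl⟩
    exact h Finset.disjoint_sdiff

lemma koszulSign_singleton_singleton {i j : Fin 6} (hij : i < j) : koszulSign {i} {j} = 1 := by
  simp [koszulSign, Finset.filter_singleton, hij.not_gt]

lemma koszulSign_singleton_singleton_of_gt {i j : Fin 6} (hji : j < i) :
    koszulSign {i} {j} = -1 := by
  simp [koszulSign, Finset.filter_singleton, hji]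

lemma wedge_gen_singleton_gen_singleton {i j : Fin 6} (hij : i < j) :
    wedge (gen {i}) (gen {j}) = gen {i, j} := by
  funext S
  rw [wedge_gen_gen, gen_apply]
  by_cases hS : S = {i, j}
  · subst hS
    rw [if_pos ⟨by simp, by simp [Finset.insert_sdiff_of_mem, hij.ne']⟩, if_pos rfl,
      koszulSign_singleton_singleton hij]
  · rw [if_neg hS, if_neg]
    rintro ⟨hi, hj⟩
    exact hS (by rw [← Finset.union_sdiff_of_subset hi, hj]; rfl)

lemma wedge_apply_pair {f h : Lam} (hf : f ∈ degSub 1) (hh : h ∈ degSub 1) {i j : Fin 6}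
    (hij : i < j) : wedge f h {i, j} = f {i} * h {j} - f {j} * h {i} := by
  have h0 : (∅ : Finset (Fin 6)).card ≠ 1 := by simp
  have hpow : ({j} : Finset (Fin 6)).powerset = {∅, {j}} := by
    ext T; simp [Finset.subset_singleton_iff]
  rw [wedge, Finset.sum_powerset_insert (by simp [hij.ne]), hpow,
    Finset.sum_pair (by simp), Finset.sum_pair (by simp)]
  have hji : ({j} : Finset (Fin 6)) \ {i} = {j} :=
    Finset.sdiff_eq_self_of_disjoint (by simp [hij.ne'])
  simp [Finset.insert_sdiff_of_mem, hij.ne, hji, hf ∅ h0, hh ∅ h0,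
    koszulSign_singleton_singleton hij, koszulSign_singleton_singleton_of_gt hij]
  ring

section ceDiff

variable (g : Fin 6 → Lam)

lemma ceDiff_gen (S : Finset (Fin 6)) : ceDiff g (gen S) =
    ∑ i ∈ S, ((-1 : ℝ) ^ ((S.filter fun j => j < i).card)) • wedge (g i) (gen (S.erase i)) := by
  rw [ceDiff, show gen S = Pi.basisFun ℝ (Finset (Fin 6)) S by simp [gen], Basis.constr_basis]

lemma ceDiff_gen_singleton (i : Fin 6) : ceDiff g (gen {i}) = g i := by
  simp [ceDiff_gen, wedge_gen_empty, Finset.filter_singleton]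

lemma ceDiff_of_mem_degSub_one {c : Lam} (hc : c ∈ degSub 1) : ceDiff g c = ∑ i, c {i} • g i := by
  conv_lhs => rw [eq_sum_smul_gen_of_mem_degSub_one hc]
  simp [ceDiff_gen_singleton]

lemma ceDiff_apply_eq_zero {U : Finset (Fin 6)} (hg : ∀ i, ∀ T ⊆ U, g i T = 0) (f : Lam) :
    ceDiff g f U = 0 := by
  rw [ceDiff, Basis.constr_apply, Finsupp.sum, Finset.sum_apply]
  refine Finset.sum_eq_zero fun S _ => ?_
  simp only [Pi.smul_apply, Finset.sum_apply, wedge_apply_eq_zero_of_left (hg _), smul_zero,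
    Finset.sum_const_zero]

end ceDiff

lemma gDiff_apply_of_zero_notMem (i : Fin 6) {T : Finset (Fin 6)} (hT : 0 ∉ T) : gDiff i T = 0 := by
  have hne : ∀ U : Finset (Fin 6), 0 ∈ U → gen U T = 0 := fun U hU => by
    rw [gen_apply, if_neg (by rintro rfl; exact hT hU)]
  fin_cases i
  exacts [rfl, rfl, rfl, rfl, hne _ (by simp), hne _ (by simp)]

lemma D_apply_of_zero_notMem (f : Lam) {U : Finset (Fin 6)} (hU : 0 ∉ U) : D f U = 0 :=
  ceDiff_apply_eq_zero gDiff
    (fun i _ hT => gDiff_apply_of_zero_notMem i fun h => hU (hT h)) f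

lemma apply_eq_of_sub_mem_range_D {f h : Lam} (hfh : f - h ∈ LinearMap.range D)
    {U : Finset (Fin 6)} (hU : 0 ∉ U) : f U = h U := by
  obtain ⟨e, he⟩ := hfh
  rw [← sub_eq_zero, ← Pi.sub_apply, ← he, D_apply_of_zero_notMem e hU]

lemma apply_p_eq_zero_of_D_eq_zero {c : Lam} (hc : c ∈ degSub 1) (hD : D c = 0) : c {4} = 0 := by
  have h := congrFun hD {0, 1}
  rw [D, ceDiff_of_mem_degSub_one gDiff hc, Fin.sum_univ_six] at h
  simpa [gDiff, gen_apply, show ({0, 1} : Finset (Fin 6)) ≠ {0, 4} by decide] using h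

lemma D_gen_xp : D (gen {1, 4}) = 0 := by
  rw [D, ceDiff_gen, Finset.sum_pair (by decide)]
  simp [gDiff, zero_wedge, wedge_gen_gen_of_not_disjoint]

theorem not_formal :
    ¬ ∃ ψ : Lam →ₗ[ℝ] Lam,
        (∀ k, (degSub k).map ψ ≤ degSub k) ∧
        ψ (gen ∅) = gen ∅ ∧
        (∀ f, ψ (D f) = 0) ∧
        (∀ f, D (ψ f) = 0) ∧
        (∀ f h, ψ (wedge f h) - wedge (ψ f) (ψ h) ∈ LinearMap.range D) ∧
        (∀ f, D f = 0 → ψ f - f ∈ LinearMap.range D) := by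
  rintro ⟨ψ, hdeg, -, -, hDψ, hmul, hcoh⟩
  have hψ : ∀ i : Fin 6, ψ (gen {i}) ∈ degSub 1 := fun i => hdeg 1 ⟨_, gen_mem_degSub {i}, rfl⟩
  have hxp : (0 : Fin 6) ∉ ({1, 4} : Finset (Fin 6)) := by decide
  have hclass : ψ (gen {1, 4}) {1, 4} = 1 := by
    rw [apply_eq_of_sub_mem_range_D (hcoh _ D_gen_xp) hxp, gen_apply, if_pos rfl]
  have hprod : ψ (gen {1, 4}) {1, 4} = 0 := by
    rw [← wedge_gen_singleton_gen_singleton (by decide), apply_eq_of_sub_mem_range_D (hmul _ _) hxp,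
      wedge_apply_pair (hψ 1) (hψ 4) (by decide),
      apply_p_eq_zero_of_D_eq_zero (hψ 1) (hDψ _), apply_p_eq_zero_of_D_eq_zero (hψ 4) (hDψ _)]
    ring
  exact one_ne_zero (hclass.symm.trans hprod)
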